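/- Let ρ be a density matrix on ℂ^d with spectral decomposition ρ = Σ_{x ∈ Fin d} p_x |x⟩⟨x| and von Neumann entropy S(ρ) = −Σ_x p_x log₂ p_x. For every ε > 0 and δ > 0 there exists N₀ ∈ ℕ such that for every N ≥ N₀ the dimension of the typical subspace, dim 𝖥_{N,ε} = Tr[P_{N,ε}] = |T_{N,ε}|, satisfies (1 − δ)·2^{N(S(ρ)−ε)} ≤ |T_{N,ε}| ≤ 2^{N(S(ρ)+ε)}. -/

import Mathlib

open Matrix
open scoped ComplexOrder

noncomputable section

/-- The `ε`-typical set of length-`N` sequences for eigenvalues `p` and entropy `S`: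
sequences with `2^{−N(S+ε)} ≤ Π_k p_{x_k} ≤ 2^{−N(S−ε)}`. -/
def typicalSet {ι : Type*} [Fintype ι] (p : ι → ℝ) (S : ℝ) (N : ℕ) (ε : ℝ) :
    Finset (Fin N → ι) :=
  Finset.univ.filter fun xs =>
    (2 : ℝ) ^ (-(N : ℝ) * (S + ε)) ≤ ∏ k, p (xs k) ∧
      ∏ k, p (xs k) ≤ (2 : ℝ) ^ (-(N : ℝ) * (S - ε))

/-!
The eigenvalues `p` form a probability vector, since `ρ ⪰ 0` and `Tr ρ = 1`. Give a sequence
`xs` the i.i.d. weight `w xs = ∏ k, p (xs k)`. Typical sequences have weight between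
`2^{-N(S+ε)}` and `2^{-N(S-ε)}`, so `|T| 2^{-N(S+ε)} ≤ w(T) ≤ 1` and `w(T) ≤ |T| 2^{-N(S-ε)}`.
Outside `T` the centred surprisal `∑ k, (-log₂ p (xs k) - S)` exceeds `N ε` in absolute value,
while its second moment under `w` is `N` times the variance of `-log₂ p`; Chebyshev's inequality
gives `w(Tᶜ) ≤ Var / (N ε²) → 0`, hence `w(T) ≥ 1 - δ` for large `N`.
-/

namespace Matrix

variable {m n R : Type*} [Fintype m] [Fintype n] [DecidableEq m]

lemma sum_smul_vecMulVec_mulVec_of_orthonormal [CommSemiring R] [StarRing R]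
    (c : m → R) (v : m → n → R)
    (honb : ∀ x y, star (v x) ⬝ᵥ v y = if x = y then 1 else 0) (x : m) :
    (∑ y, c y • vecMulVec (v y) (star (v y))) *ᵥ v x = c x • v x := by
  simp [sum_mulVec, smul_mulVec, vecMulVec_mulVec, honb]

lemma trace_sum_smul_vecMulVec_of_orthonormal [CommSemiring R] [StarRing R]
    (c : m → R) (v : m → n → R)
    (honb : ∀ x y, star (v x) ⬝ᵥ v y = if x = y then 1 else 0) :
    (∑ y, c y • vecMulVec (v y) (star (v y))).trace = ∑ y, c y := by
  simp [trace_sum, trace_smul, dotProduct_comm (v _), honb]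

lemma PosSemidef.coeff_nonneg_of_eq_sum_smul_vecMulVec {ρ : Matrix n n ℂ} (hρ : ρ.PosSemidef)
    {p : m → ℝ} {v : m → n → ℂ}
    (honb : ∀ x y, star (v x) ⬝ᵥ v y = if x = y then 1 else 0)
    (hspec : ρ = ∑ x, (p x : ℂ) • vecMulVec (v x) (star (v x))) (x : m) : 0 ≤ p x := by
  have h := hρ.dotProduct_mulVec_nonneg (v x)
  rwa [hspec, sum_smul_vecMulVec_mulVec_of_orthonormal _ _ honb, dotProduct_smul, honb,
    if_pos rfl, smul_eq_mul, mul_one, Complex.zero_le_real] at h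

end Matrix

section Typical

variable {ι : Type*} [Fintype ι] {p : ι → ℝ} {N : ℕ}

lemma sum_prod_apply_eq_one (hsum : ∑ x, p x = 1) :
    ∑ xs : Fin N → ι, ∏ k, p (xs k) = 1 := by
  rw [← Fintype.prod_sum, hsum, Finset.prod_const_one]

lemma sum_prod_mul_apply_mul_apply {g : ι → ℝ} (hsum : ∑ x, p x = 1)
    (hmean : ∑ x, p x * g x = 0) (k l : Fin N) :
    ∑ xs : Fin N → ι, (∏ m, p (xs m)) * (g (xs k) * g (xs l))
      = if k = l then ∑ x, p x * g x ^ 2 else 0 := by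
  set φ : Fin N → ι → ℝ := fun m x =>
    p x * (if m = k then g x else 1) * (if m = l then g x else 1)
  have hfactor : ∀ xs : Fin N → ι,
      (∏ m, p (xs m)) * (g (xs k) * g (xs l)) = ∏ m, φ m (xs m) := by
    intro xs
    simp only [φ, Finset.prod_mul_distrib, Finset.prod_ite_eq', Finset.mem_univ, if_true]
    ring
  -- the summand factorises over the coordinates, so the sum is a product of one-coordinate sums
  simp_rw [hfactor, ← Fintype.prod_sum]
  split_ifs with hkl
  · subst hkl
    rw [Finset.prod_eq_single k (fun m _ hm => by simp [φ, hm, hsum]) (by simp)]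
    simp [φ, pow_two, mul_assoc]
  · exact Finset.prod_eq_zero (Finset.mem_univ k) (by simpa [φ, hkl] using hmean)

lemma sum_prod_mul_sum_sq {g : ι → ℝ} (hsum : ∑ x, p x = 1) (hmean : ∑ x, p x * g x = 0) :
    ∑ xs : Fin N → ι, (∏ k, p (xs k)) * (∑ k, g (xs k)) ^ 2
      = N * ∑ x, p x * g x ^ 2 := by
  calc ∑ xs : Fin N → ι, (∏ k, p (xs k)) * (∑ k, g (xs k)) ^ 2
      = ∑ k, ∑ l, ∑ xs : Fin N → ι, (∏ m, p (xs m)) * (g (xs k) * g (xs l)) := by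
        simp_rw [sq, Finset.sum_mul_sum, Finset.mul_sum]
        rw [Finset.sum_comm]
        exact Finset.sum_congr rfl fun k _ => Finset.sum_comm
    _ = N * ∑ x, p x * g x ^ 2 := by
        simp [sum_prod_mul_apply_mul_apply hsum hmean]

lemma mem_typicalSet_iff_abs_sum_le {S ε : ℝ} {xs : Fin N → ι} (hpos : ∀ k, 0 < p (xs k)) :
    xs ∈ typicalSet p S N ε ↔ |∑ k, (-Real.logb 2 (p (xs k)) - S)| ≤ N * ε := by
  have hprod : 0 < ∏ k, p (xs k) := Finset.prod_pos fun k _ => hpos k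
  have hsum : ∑ k, (-Real.logb 2 (p (xs k)) - S) = -Real.logb 2 (∏ k, p (xs k)) - N * S := by
    simp [Real.logb_prod _ _ fun k _ => (hpos k).ne', Finset.sum_sub_distrib]
  rw [typicalSet, Finset.mem_filter, ← Real.le_logb_iff_rpow_le one_lt_two hprod,
    ← Real.logb_le_iff_le_rpow one_lt_two hprod, hsum, abs_le]
  simp only [Finset.mem_univ, true_and]
  constructor <;> rintro ⟨h₁, h₂⟩ <;> constructor <;> linarith

lemma sum_compl_typicalSet_mul_le [DecidableEq ι] {S ε : ℝ} (hp0 : ∀ x, 0 ≤ p x)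
    (hsum : ∑ x, p x = 1) (hS : S = -∑ x, p x * Real.logb 2 (p x)) (hε : 0 ≤ ε) :
    (∑ xs ∈ (typicalSet p S N ε)ᶜ, ∏ k, p (xs k)) * (N * ε) ^ 2
      ≤ N * ∑ x, p x * (-Real.logb 2 (p x) - S) ^ 2 := by
  set g : ι → ℝ := fun x => -Real.logb 2 (p x) - S
  have hmean : ∑ x, p x * g x = 0 := by
    simp only [g, mul_sub, mul_neg, Finset.sum_sub_distrib, Finset.sum_neg_distrib,
      ← Finset.sum_mul, hsum, one_mul, ← hS, sub_self]
  have hw0 : ∀ xs : Fin N → ι, 0 ≤ ∏ k, p (xs k) := fun xs =>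
    Finset.prod_nonneg fun k _ => hp0 _
  have hdev : ∀ xs ∉ typicalSet p S N ε,
      (∏ k, p (xs k)) * (N * ε) ^ 2 ≤ (∏ k, p (xs k)) * (∑ k, g (xs k)) ^ 2 := by
    intro xs hxs
    rcases (hw0 xs).eq_or_lt with h0 | hpos
    · simp [← h0]
    have hpk : ∀ k, 0 < p (xs k) := fun k =>
      (hp0 _).lt_of_ne (Finset.prod_ne_zero_iff.mp hpos.ne' k (Finset.mem_univ k)).symm
    rw [mem_typicalSet_iff_abs_sum_le hpk, not_le] at hxs
    refine mul_le_mul_of_nonneg_left ?_ (hw0 xs)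
    rw [sq_le_sq, abs_of_nonneg (by positivity)]
    exact hxs.le
  calc (∑ xs ∈ (typicalSet p S N ε)ᶜ, ∏ k, p (xs k)) * (N * ε) ^ 2
      ≤ ∑ xs ∈ (typicalSet p S N ε)ᶜ, (∏ k, p (xs k)) * (∑ k, g (xs k)) ^ 2 := by
        rw [Finset.sum_mul]
        exact Finset.sum_le_sum fun xs hxs => hdev xs (Finset.mem_compl.mp hxs)
    _ ≤ ∑ xs : Fin N → ι, (∏ k, p (xs k)) * (∑ k, g (xs k)) ^ 2 :=
        Finset.sum_le_univ_sum_of_nonneg fun xs => mul_nonneg (hw0 xs) (sq_nonneg _)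
    _ = N * ∑ x, p x * g x ^ 2 := sum_prod_mul_sum_sq hsum hmean

lemma one_sub_div_le_sum_typicalSet {S ε : ℝ} (hp0 : ∀ x, 0 ≤ p x) (hsum : ∑ x, p x = 1)
    (hS : S = -∑ x, p x * Real.logb 2 (p x)) (hε : 0 < ε) (hN : 0 < N) :
    1 - (∑ x, p x * (-Real.logb 2 (p x) - S) ^ 2) / ε ^ 2 / N
      ≤ ∑ xs ∈ typicalSet p S N ε, ∏ k, p (xs k) := by
  classical
  set V := ∑ x, p x * (-Real.logb 2 (p x) - S) ^ 2
  have hcheb := sum_compl_typicalSet_mul_le (N := N) hp0 hsum hS hε.le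
  have hcompl : ∑ xs ∈ (typicalSet p S N ε)ᶜ, ∏ k, p (xs k) ≤ V / ε ^ 2 / N := by
    rw [div_div, le_div_iff₀ (by positivity)]
    refine le_of_mul_le_mul_left ?_ (Nat.cast_pos.mpr hN)
    linarith
  have hsplit := Finset.sum_add_sum_compl (typicalSet p S N ε) fun xs => ∏ k, p (xs k)
  rw [sum_prod_apply_eq_one hsum] at hsplit
  linarith

lemma card_typicalSet_le {S ε : ℝ} (hp0 : ∀ x, 0 ≤ p x) (hsum : ∑ x, p x = 1) :
    ((typicalSet p S N ε).card : ℝ) ≤ 2 ^ ((N : ℝ) * (S + ε)) := by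
  have hlower : ((typicalSet p S N ε).card : ℝ) * (2 ^ ((N : ℝ) * (S + ε)))⁻¹
      ≤ ∑ xs ∈ typicalSet p S N ε, ∏ k, p (xs k) := by
    rw [← Real.rpow_neg zero_le_two, ← neg_mul, ← nsmul_eq_mul, ← Finset.sum_const]
    exact Finset.sum_le_sum fun xs hxs => (Finset.mem_filter.mp hxs).2.1
  have hmass : ∑ xs ∈ typicalSet p S N ε, ∏ k, p (xs k) ≤ 1 :=
    (Finset.sum_le_univ_sum_of_nonneg fun xs => Finset.prod_nonneg fun k _ => hp0 _).trans
      (sum_prod_apply_eq_one hsum).le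
  simpa using (mul_inv_le_iff₀ (by positivity)).mp (hlower.trans hmass)

lemma sum_typicalSet_mul_le_card {S ε : ℝ} :
    (∑ xs ∈ typicalSet p S N ε, ∏ k, p (xs k)) * 2 ^ ((N : ℝ) * (S - ε))
      ≤ (typicalSet p S N ε).card := by
  rw [← le_mul_inv_iff₀ (by positivity), ← Real.rpow_neg zero_le_two, ← neg_mul,
    ← nsmul_eq_mul, ← Finset.sum_const]
  exact Finset.sum_le_sum fun xs hxs => (Finset.mem_filter.mp hxs).2.2

end Typical

/-- Bounds on the dimension of the typical subspace (the cardinality of the typical set):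
`(1 − δ)·2^{N(S−ε)} ≤ |T_{N,ε}| ≤ 2^{N(S+ε)}` for all sufficiently large `N`. -/
theorem typical_subspace_dimension_bounds (d : ℕ)
    (ρ : Matrix (Fin d) (Fin d) ℂ) (hρ : ρ.PosSemidef) (htr : ρ.trace = 1)
    (p : Fin d → ℝ) (v : Fin d → (Fin d → ℂ))
    (honb : ∀ x y, star (v x) ⬝ᵥ v y = if x = y then 1 else 0)
    (hspec : ρ = ∑ x, (p x : ℂ) • Matrix.vecMulVec (v x) (star (v x)))
    (S : ℝ) (hS : S = -∑ x, p x * Real.logb 2 (p x))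
    (ε δ : ℝ) (hε : 0 < ε) (hδ : 0 < δ) :
    ∃ N₀ : ℕ, ∀ N ≥ N₀,
      (1 - δ) * (2 : ℝ) ^ ((N : ℝ) * (S - ε)) ≤ ((typicalSet p S N ε).card : ℝ) ∧
        ((typicalSet p S N ε).card : ℝ) ≤ (2 : ℝ) ^ ((N : ℝ) * (S + ε)) := by
  have hp0 : ∀ x, 0 ≤ p x := hρ.coeff_nonneg_of_eq_sum_smul_vecMulVec honb hspec
  have hsum : ∑ x, p x = 1 := by
    rw [hspec, trace_sum_smul_vecMulVec_of_orthonormal _ _ honb] at htr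
    exact_mod_cast htr
  set V := ∑ x, p x * (-Real.logb 2 (p x) - S) ^ 2
  obtain ⟨N₀, hN₀⟩ := Filter.eventually_atTop.mp <| (Filter.eventually_gt_atTop 0).and <|
    (tendsto_const_div_atTop_nhds_zero_nat (V / ε ^ 2)).eventually (ge_mem_nhds hδ)
  refine ⟨N₀, fun N hN => ⟨?_, card_typicalSet_le hp0 hsum⟩⟩
  obtain ⟨hNpos, hVδ⟩ := hN₀ N hN
  calc (1 - δ) * (2 : ℝ) ^ ((N : ℝ) * (S - ε))
      ≤ (∑ xs ∈ typicalSet p S N ε, ∏ k, p (xs k)) * 2 ^ ((N : ℝ) * (S - ε)) := by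
        gcongr
        linarith [one_sub_div_le_sum_typicalSet hp0 hsum hS hε hNpos]
    _ ≤ (typicalSet p S N ε).card := sum_typicalSet_mul_le_card
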